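/- arXiv:1506.05059 — 5 statements merged into one kernel-verified Lean document; each statement's English description precedes it below -/
import Mathlib

section
/- Suppose G is abelian. Let ω and κ be two G-incidence phase functions on the same simple graph Γ such that the associated gain structures Φ(ω) and Φ(κ) are switching equivalent, i.e. there exists ζ : V → G with κ-gain φ_κ(i,j) = ζ(i)⁻¹ φ_ω(i,j) ζ(j) for all adjacent i, j. Then the associated line-graph gain structures Φ(ω_Λ) and Φ(κ_Λ) are switching equivalent: there exists ξ : E → G such that for every pair of distinct adjacent edges e, f with common vertex v, κ(v,e)⁻¹·s·κ(v,f) = ξ(e)⁻¹·(ω(v,e)⁻¹·s·ω(v,f))·ξ(f). -/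
private lemma switch_aux {G : Type*} [CommGroup G] (a b c d e f σ : G)
    (h : a * σ * b⁻¹ = c⁻¹ * (d * σ * e⁻¹) * f) : a * d⁻¹ * c = b * e⁻¹ * f := by
  apply Additive.ofMul.injective
  have h' := congrArg Additive.ofMul h
  simp only [ofMul_mul, ofMul_inv] at h' ⊢
  have hA : Additive.ofMul a = Additive.ofMul b - Additive.ofMul σ +
      (-Additive.ofMul c + (Additive.ofMul d + Additive.ofMul σ + -Additive.ofMul e)
        + Additive.ofMul f) := by rw [← h']; abel
  rw [hA]; abel

private lemma switch_aux2 {G : Type*} [CommGroup G] (a b c d z σ : G) :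
    a⁻¹ * σ * b = (a * c⁻¹ * z)⁻¹ * (c⁻¹ * σ * d) * (b * d⁻¹ * z) := by
  apply Additive.ofMul.injective
  simp only [ofMul_mul, ofMul_inv]
  abel

/-- (Line graphs of switching-equivalent oriented gain graphs are
switching equivalent.)  Let `G` be abelian with involution `σ` and let `ω, κ`
be incidence phase functions on the same simple graph `Γ` whose associated gain
structures are switching equivalent.  Then the associated line-graph gain
structures are switching equivalent: there is `ξ : Sym2 V → G` such that for
all distinct adjacent edges `e, f` with common vertex `v`,
`κ(v,e)⁻¹·σ·κ(v,f) = ξ(e)⁻¹·(ω(v,e)⁻¹·σ·ω(v,f))·ξ(f)`. -/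
theorem line_graphs_of_switching_equivalent_orientations
    {V : Type*} [Fintype V] {G : Type*} [CommGroup G]
    (Γ : SimpleGraph V) (σ : G) (hσ : σ ^ 2 = 1)
    (ω κ : V → Sym2 V → G)
    (hswitch : ∃ ζ : V → G, ∀ i j : V, Γ.Adj i j →
      κ i s(i, j) * σ * (κ j s(i, j))⁻¹
        = (ζ i)⁻¹ * (ω i s(i, j) * σ * (ω j s(i, j))⁻¹) * ζ j) :
    ∃ ξ : Sym2 V → G, ∀ (v : V) (e f : Sym2 V),
      e ∈ Γ.edgeSet → f ∈ Γ.edgeSet → e ≠ f → v ∈ e → v ∈ f →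
      (κ v e)⁻¹ * σ * κ v f = (ξ e)⁻¹ * ((ω v e)⁻¹ * σ * ω v f) * ξ f := by
  obtain ⟨ζ, hζ⟩ := hswitch
  -- endpoint-independence of the candidate switching value
  have key : ∀ (e : Sym2 V), e ∈ Γ.edgeSet → ∀ v w : V, v ∈ e → w ∈ e →
      κ v e * (ω v e)⁻¹ * ζ v = κ w e * (ω w e)⁻¹ * ζ w := by
    intro e he v w hv hw
    rcases eq_or_ne v w with rfl | hvw
    · rfl
    · have heq : e = s(v, w) := ((Sym2.mem_and_mem_iff hvw).1 ⟨hv, hw⟩)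
      subst heq
      have hadj : Γ.Adj v w := (Γ.mem_edgeSet).1 he
      exact switch_aux _ _ _ _ _ _ _ (hζ v w hadj)
  classical
  refine ⟨fun e => κ e.out.1 e * (ω e.out.1 e)⁻¹ * ζ e.out.1, ?_⟩
  intro v e f he hf hef hve hvf
  have hx : κ e.out.1 e * (ω e.out.1 e)⁻¹ * ζ e.out.1
      = κ v e * (ω v e)⁻¹ * ζ v := key e he _ v (Sym2.out_fst_mem e) hve
  have hy : κ f.out.1 f * (ω f.out.1 f)⁻¹ * ζ f.out.1
      = κ v f * (ω v f)⁻¹ * ζ v := key f hf _ v (Sym2.out_fst_mem f) hvf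
  simp only [hx, hy]
  exact switch_aux2 _ _ _ _ _ _
end

section
/- Suppose G is abelian. Fix an edge e₀ of Γ and g ∈ G, and let κ be the G-incidence phase function obtained from ω by changing the orientation of the single edge e₀: κ(v,e₀) = ω(v,e₀)·g for each endpoint v of e₀, and κ(v,e) = ω(v,e) for all other incidences. Then the associated gain structures coincide, Φ(κ) = Φ(ω), and the line-graph gain structure of κ is obtained from that of ω by switching at the single line-graph vertex e₀: for all distinct adjacent edges e, f with common vertex v, κ(v,e)⁻¹·s·κ(v,f) = ξ(e)⁻¹·(ω(v,e)⁻¹·s·ω(v,f))·ξ(f), where ξ(e₀) = g and ξ(e) = 1 for all edges e ≠ e₀. -/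
/-- Changing the orientation of a single edge `e₀` (multiplying
both of its incidence phases by `g`) does not change the associated gain
structure, and changes the line-graph gain structure by switching at the single
line-graph vertex `e₀` with switching value `g`. -/
theorem reorient_single_edge_switches_line_graph
    {V : Type*} [Fintype V] [DecidableEq V] {G : Type*} [CommGroup G]
    (Γ : SimpleGraph V) (σ : G) (hσ : σ ^ 2 = 1)
    (ω κ : V → Sym2 V → G) (e₀ : Sym2 V) (he₀ : e₀ ∈ Γ.edgeSet) (g : G)
    (hκ : κ = fun v e => if e = e₀ then ω v e * g else ω v e)
    (ξ : Sym2 V → G)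
    (hξ : ξ = fun e => if e = e₀ then g else 1) :
    (∀ i j : V, Γ.Adj i j →
      κ i s(i, j) * σ * (κ j s(i, j))⁻¹ = ω i s(i, j) * σ * (ω j s(i, j))⁻¹) ∧
    (∀ (v : V) (e f : Sym2 V),
      e ∈ Γ.edgeSet → f ∈ Γ.edgeSet → e ≠ f → v ∈ e → v ∈ f →
      (κ v e)⁻¹ * σ * κ v f = (ξ e)⁻¹ * ((ω v e)⁻¹ * σ * ω v f) * ξ f) := by
  subst hκ hξ
  constructor
  · intro i j _
    by_cases h : s(i, j) = e₀
    · simp only [h, ite_true, if_pos]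
      rw [mul_assoc (ω i e₀) g σ, mul_comm g σ]
      group
    · simp only [if_neg h]
  · intro v e f _ _ hef _ _
    by_cases he : e = e₀
    · by_cases hf : f = e₀
      · exact absurd (he.trans hf.symm) hef
      · simp only [he, ite_true, if_pos, if_neg hf, mul_one]
        group
    · by_cases hf : f = e₀
      · simp only [hf, ite_true, if_pos, if_neg he, inv_one, one_mul]
        group
      · simp only [if_neg he, if_neg hf, inv_one, one_mul, mul_one]
end

section
/- Suppose G is abelian. Let w₁ f₁ w₂ f₂ ⋯ w_{k−1} f_{k−1} w_k f₀ w₁ be a closed walk in Γ, where f_i is the edge joining w_i and w_{i+1} for 1 ≤ i ≤ k−1, and f₀ is the edge joining w_k and w₁. Then the product of line-graph gains around the corresponding closed sequence of edges equals the gain of the closed walk in Φ(ω): (ω(w₁,f₀)⁻¹·s·ω(w₁,f₁)) · (ω(w₂,f₁)⁻¹·s·ω(w₂,f₂)) ⋯ (ω(w_k,f_{k−1})⁻¹·s·ω(w_k,f₀)) = φ(w₁,w₂)·φ(w₂,w₃) ⋯ φ(w_k,w₁), where φ(w_i,w_{i+1}) = ω(w_i,f_i)·s·ω(w_{i+1},f_i)⁻¹.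 -/
open Finset

/-- For abelian `G`, given a closed walk
`w 0, w 1, …, w (k-1), w 0` in `Γ` whose `i`-th step uses the edge
`f i = s(w i, w (i+1))` (indices mod `k`), the product of the line-graph gains
around the corresponding closed sequence of edges equals the gain of the closed
walk in `Φ(ω)`:
`∏ᵢ (ω(wᵢ, f_{i-1})⁻¹ · σ · ω(wᵢ, fᵢ)) = ∏ᵢ (ω(wᵢ, fᵢ) · σ · ω(w_{i+1}, fᵢ)⁻¹)`. -/
theorem line_graph_gain_of_closed_walk
    {V : Type*} {G : Type*} [CommGroup G]
    (Γ : SimpleGraph V) (σ : G) (hσ : σ ^ 2 = 1)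
    (ω : V → Sym2 V → G) (k : ℕ) [NeZero k]
    (w : Fin k → V) (f : Fin k → Sym2 V)
    (hadj : ∀ i : Fin k, Γ.Adj (w i) (w (i + 1)))
    (hf : ∀ i : Fin k, f i = s(w i, w (i + 1))) :
    ∏ i : Fin k, ((ω (w i) (f (i - 1)))⁻¹ * σ * ω (w i) (f i))
      = ∏ i : Fin k, (ω (w i) (f i) * σ * (ω (w (i + 1)) (f i))⁻¹) := by
  have key : ∏ i : Fin k, (ω (w i) (f (i - 1)))⁻¹
      = ∏ i : Fin k, (ω (w (i + 1)) (f i))⁻¹ := by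
    apply Fintype.prod_equiv (Equiv.subRight (1 : Fin k))
    intro i
    simp [Equiv.subRight, sub_add_cancel]
  simp only [prod_mul_distrib, key]
  ac_rfl
end

section
/- Let s ∈ {+1,−1} and let ω and κ be two T-incidence phase functions on the same simple graph Γ that are orientations of the same T^s-gain graph, i.e. ω(i,e)·s·conj(ω(j,e)) = κ(i,e)·s·conj(κ(j,e)) for every edge e with endpoints i and j. Then the line-graph adjacency matrices A_Λ(ω) and A_Λ(κ) have the same characteristic polynomial, and hence the same spectrum. -/
/-
Two orientations of the same gain graph differ, edge by edge, by a unit-modulus scalar: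
`κ v e = g e * ω v e` at both endpoints `v` of `e`. Hence the `(e, f)` entry of `A_Λ(κ)` is
`conj (g e) * g f` times that of `A_Λ(ω)`, i.e. `A_Λ(κ) = D⁻¹ A_Λ(ω) D` for the unitary diagonal
matrix `D = diag g`, and similar matrices share characteristic polynomial and spectrum.
-/

open Finset Matrix

/-- The adjacency matrix of the line graph of an oriented `𝕋^σ`-gain graph:
the `(e,f)` entry is `σ · conj (ω v e) · ω v f` when `e ≠ f` share the (unique)
common endpoint `v`, and `0` otherwise. -/
noncomputable def lineAdjMatrix {V : Type*} [Fintype V] [DecidableEq V]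
    (Γ : SimpleGraph V) [DecidableRel Γ.Adj] (σ : ℂ) (ω : V → Sym2 V → ℂ) :
    Matrix Γ.edgeSet Γ.edgeSet ℂ :=
  fun e f =>
    if e = f then 0
    else ∑ v : V, if v ∈ (e : Sym2 V) ∧ v ∈ (f : Sym2 V) then
      σ * (starRingEnd ℂ) (ω v (e : Sym2 V)) * ω v (f : Sym2 V) else 0

open ComplexConjugate

lemma Complex.exists_norm_eq_one_of_mul_conj_eq {a b c d : ℂ} (ha : ‖a‖ = 1) (hc : ‖c‖ = 1)
    (h : a * conj b = c * conj d) : ∃ z : ℂ, ‖z‖ = 1 ∧ c = z * a ∧ d = z * b := by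
  have ha' : conj a * a = 1 := by rw [Complex.conj_mul', ha]; norm_num
  have hc' : c * conj c = 1 := by rw [Complex.mul_conj', hc]; norm_num
  have h' : conj a * b = conj c * d := by simpa using congrArg conj h
  refine ⟨c * conj a, by simp [ha, hc], ?_, ?_⟩
  · linear_combination -c * ha'
  · linear_combination -c * h' - d * hc'

def Matrix.diagonalUnit {n : Type*} [Fintype n] [DecidableEq n] (g : n → ℂ)
    (hg : ∀ i, ‖g i‖ = 1) : (Matrix n n ℂ)ˣ where
  val := diagonal g
  inv := diagonal (star g)
  val_inv := by simp [diagonal_mul_diagonal, Complex.mul_conj', hg]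
  inv_val := by simp [diagonal_mul_diagonal, Complex.conj_mul', hg]

section LineGraph

variable {V : Type*} (Γ : SimpleGraph V) (ω κ : V → Sym2 V → ℂ)

lemma lineAdjMatrix_switch [Fintype V] [DecidableEq V] [DecidableRel Γ.Adj] (σ : ℂ)
    {g : Γ.edgeSet → ℂ}
    (hg : ∀ (e : Γ.edgeSet) (v : V), v ∈ (e : Sym2 V) → κ v e = g e * ω v e) :
    lineAdjMatrix Γ σ κ = diagonal (star g) * lineAdjMatrix Γ σ ω * diagonal g := by
  ext e f
  simp only [diagonal_mul, mul_diagonal, lineAdjMatrix, Pi.star_apply, Complex.star_def]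
  split_ifs
  · simp
  · rw [Finset.mul_sum, Finset.sum_mul]
    refine Finset.sum_congr rfl fun v _ => ?_
    split_ifs with hv
    · rw [hg e v hv.1, hg f v hv.2, map_mul]
      ring
    · simp

lemma exists_switching_of_gain_eq
    (hω : ∀ (v : V) (e : Sym2 V), e ∈ Γ.edgeSet → v ∈ e → ‖ω v e‖ = 1)
    (hκ : ∀ (v : V) (e : Sym2 V), e ∈ Γ.edgeSet → v ∈ e → ‖κ v e‖ = 1)
    (hgain : ∀ i j : V, Γ.Adj i j →
      ω i s(i, j) * conj (ω j s(i, j)) = κ i s(i, j) * conj (κ j s(i, j))) :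
    ∃ g : Γ.edgeSet → ℂ, (∀ e, ‖g e‖ = 1) ∧
      ∀ (e : Γ.edgeSet) (v : V), v ∈ (e : Sym2 V) → κ v e = g e * ω v e := by
  have hedge : ∀ e : Γ.edgeSet, ∃ z : ℂ, ‖z‖ = 1 ∧ ∀ v ∈ (e : Sym2 V), κ v e = z * ω v e := by
    rintro ⟨e, he⟩
    induction e using Sym2.ind with
    | _ i j =>
      obtain ⟨z, hz, hi, hj⟩ := Complex.exists_norm_eq_one_of_mul_conj_eq
        (hω i _ he (Sym2.mem_mk_left i j)) (hκ i _ he (Sym2.mem_mk_left i j)) (hgain i j he)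
      refine ⟨z, hz, fun v hv => ?_⟩
      rcases Sym2.mem_iff.mp hv with rfl | rfl
      exacts [hi, hj]
  choose g hg using hedge
  exact ⟨g, fun e => (hg e).1, fun e => (hg e).2⟩

end LineGraph

/-- If `ω` and `κ` are two `𝕋`-incidence phase functions on the
same simple graph which are orientations of the same `𝕋^σ`-gain graph (with
`σ ∈ {+1,−1}`), then the line-graph adjacency matrices `A_Λ(ω)` and `A_Λ(κ)`
have the same characteristic polynomial, and hence the same spectrum. -/
theorem line_graph_spectrum_independent_of_orientation
    {V : Type*} [Fintype V] [DecidableEq V]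
    (Γ : SimpleGraph V) [DecidableRel Γ.Adj]
    (σ : ℂ) (hσ : σ = 1 ∨ σ = -1) (ω κ : V → Sym2 V → ℂ)
    (hω : ∀ (v : V) (e : Sym2 V), e ∈ Γ.edgeSet → v ∈ e → ‖ω v e‖ = 1)
    (hκ : ∀ (v : V) (e : Sym2 V), e ∈ Γ.edgeSet → v ∈ e → ‖κ v e‖ = 1)
    (hsame : ∀ i j : V, Γ.Adj i j →
      ω i s(i, j) * σ * (starRingEnd ℂ) (ω j s(i, j))
        = κ i s(i, j) * σ * (starRingEnd ℂ) (κ j s(i, j))) :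
    (lineAdjMatrix Γ σ ω).charpoly = (lineAdjMatrix Γ σ κ).charpoly ∧
    spectrum ℂ (lineAdjMatrix Γ σ ω) = spectrum ℂ (lineAdjMatrix Γ σ κ) := by
  have hσ0 : σ ≠ 0 := by rcases hσ with rfl | rfl <;> norm_num
  obtain ⟨g, hg, hκω⟩ := exists_switching_of_gain_eq Γ ω κ hω hκ fun i j h =>
    mul_left_cancel₀ hσ0 (by linear_combination hsame i j h)
  have hsim : lineAdjMatrix Γ σ κ =
      (diagonalUnit g hg)⁻¹.val * lineAdjMatrix Γ σ ω * (diagonalUnit g hg).val :=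
    lineAdjMatrix_switch Γ ω κ σ hκω
  rw [hsim, spectrum.units_conjugate', coe_units_inv, charpoly_units_conj']
  exact ⟨rfl, rfl⟩
end

section
/- Suppose s = −1. Then the line-graph adjacency matrix A_Λ is Hermitian, and every eigenvalue λ of A_Λ satisfies λ ≤ 2. -/
open Finset Matrix

/-!
With `H` the incidence matrix of the phase function, `(Hᴴ H) e f` collects `conj (ω v e) · ω v f`
over the common endpoints `v` of `e` and `f`. Off the diagonal this is `σ⁻¹` times the entry of
`A_Λ`, and on the diagonal it is `2` because every edge has two endpoints of unit phase. Hence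
`A_Λ = σ (Hᴴ H - 2)`, so for `σ = -1` the matrix `A_Λ = 2 - Hᴴ H` is Hermitian with spectrum
`2 - spectrum (Hᴴ H) ⊆ (-∞, 2]`.
-/

open ComplexOrder

noncomputable def phaseIncMatrix {V : Type*} [DecidableEq V] (Γ : SimpleGraph V)
    (ω : V → Sym2 V → ℂ) : Matrix V Γ.edgeSet ℂ :=
  fun v e => if v ∈ (e : Sym2 V) then ω v e else 0

section PhaseIncMatrix

variable {V : Type*} [Fintype V] [DecidableEq V] {Γ : SimpleGraph V} {ω : V → Sym2 V → ℂ}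

theorem conjTranspose_phaseIncMatrix_mul_apply (e f : Γ.edgeSet) :
    ((phaseIncMatrix Γ ω)ᴴ * phaseIncMatrix Γ ω) e f =
      ∑ v : V, if v ∈ (e : Sym2 V) ∧ v ∈ (f : Sym2 V) then
        starRingEnd ℂ (ω v e) * ω v f else 0 := by
  simp only [mul_apply, conjTranspose_apply, phaseIncMatrix]
  refine sum_congr rfl fun v _ => ?_
  by_cases he : v ∈ (e : Sym2 V) <;> by_cases hf : v ∈ (f : Sym2 V) <;> simp [he, hf]

theorem conjTranspose_phaseIncMatrix_mul_apply_self (e : Γ.edgeSet)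
    (hω : ∀ v ∈ (e : Sym2 V), ‖ω v e‖ = 1) :
    ((phaseIncMatrix Γ ω)ᴴ * phaseIncMatrix Γ ω) e e = 2 := by
  have hterm : ∀ v ∈ (e : Sym2 V).toFinset, starRingEnd ℂ (ω v e) * ω v e = 1 := fun v hv => by
    rw [mul_comm, Complex.mul_conj, Complex.normSq_eq_norm_sq,
      hω v (Sym2.mem_toFinset.mp hv)]
    norm_num
  calc ((phaseIncMatrix Γ ω)ᴴ * phaseIncMatrix Γ ω) e e
      = ∑ v ∈ (e : Sym2 V).toFinset, starRingEnd ℂ (ω v e) * ω v e := by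
        rw [conjTranspose_phaseIncMatrix_mul_apply, sum_ite, sum_const_zero, add_zero]
        congr 1
        ext v
        simp [Sym2.mem_toFinset]
    _ = #(e : Sym2 V).toFinset := by rw [sum_congr rfl hterm, sum_const, nsmul_one]
    _ = 2 := by
      rw [Sym2.card_toFinset_of_not_isDiag _ (Γ.not_isDiag_of_mem_edgeSet e.2)]
      norm_num

theorem lineAdjMatrix_eq_smul_conjTranspose_phaseIncMatrix_mul_sub [DecidableRel Γ.Adj]
    (hω : ∀ (v : V) (e : Sym2 V), e ∈ Γ.edgeSet → v ∈ e → ‖ω v e‖ = 1) (σ : ℂ) :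
    lineAdjMatrix Γ σ ω = σ • ((phaseIncMatrix Γ ω)ᴴ * phaseIncMatrix Γ ω - 2) := by
  ext e f
  by_cases hef : e = f
  · subst hef
    simp [lineAdjMatrix, conjTranspose_phaseIncMatrix_mul_apply_self e (hω · e e.2), ofNat_apply]
  · simp only [lineAdjMatrix, if_neg hef, Matrix.smul_apply, Matrix.sub_apply,
      conjTranspose_phaseIncMatrix_mul_apply, ofNat_apply, Nat.cast_zero, sub_zero,
      smul_eq_mul, mul_sum, mul_ite, mul_zero, mul_assoc]

end PhaseIncMatrix

theorem Matrix.PosSemidef.le_of_mem_spectrum_algebraMap_sub {n 𝕜 : Type*} [Fintype n]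
    [DecidableEq n] [RCLike 𝕜] {P : Matrix n n 𝕜} (hP : P.PosSemidef) {r μ : 𝕜}
    (hμ : μ ∈ spectrum 𝕜 (algebraMap 𝕜 (Matrix n n 𝕜) r - P)) : μ ≤ r := by
  rw [← spectrum.singleton_sub_eq] at hμ
  obtain ⟨_, rfl, ν, hν, rfl⟩ := hμ
  exact sub_le_self _ ((posSemidef_iff_isHermitian_and_spectrum_nonneg.mp hP).2 hν)

/-- For `σ = −1`, the line-graph adjacency matrix of an oriented
`𝕋^{-1}`-gain graph is Hermitian and all its eigenvalues are at most `2`. -/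
theorem line_graph_eigenvalues_le_two
    {V : Type*} [Fintype V] [DecidableEq V]
    (Γ : SimpleGraph V) [DecidableRel Γ.Adj]
    (ω : V → Sym2 V → ℂ)
    (hω : ∀ (v : V) (e : Sym2 V), e ∈ Γ.edgeSet → v ∈ e → ‖ω v e‖ = 1) :
    (lineAdjMatrix Γ (-1) ω).IsHermitian ∧
    ∀ μ : ℂ, μ ∈ spectrum ℂ (lineAdjMatrix Γ (-1) ω) → μ.im = 0 ∧ μ.re ≤ 2 := by
  have hP := posSemidef_conjTranspose_mul_self (phaseIncMatrix Γ ω)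
  have hA : lineAdjMatrix Γ (-1) ω =
      algebraMap ℂ _ 2 - (phaseIncMatrix Γ ω)ᴴ * phaseIncMatrix Γ ω := by
    rw [lineAdjMatrix_eq_smul_conjTranspose_phaseIncMatrix_mul_sub hω, neg_one_smul, neg_sub,
      map_ofNat]
  refine ⟨hA ▸ (isHermitian_natCast 2).sub hP.isHermitian, fun μ hμ => ?_⟩
  obtain ⟨hre, him⟩ := Complex.le_def.mp (hP.le_of_mem_spectrum_algebraMap_sub (hA ▸ hμ))
  exact ⟨by simpa using him, by simpa using hre⟩
end
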